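/- Let n ≥ 4 be even, d ≥ 1, and let Z^d_n be the discrete torus with bipartition classes E (even vertices) and O (odd vertices). Let A ⊆ E and B ⊆ O be such that there are no edges between A and B. Then every connected component of the complement of A ∪ B in Z^d_n either is a single vertex all of whose neighbors lie in A or all in B, or has size at least 2d. Consequently the number of components of Z^d_n \ (A ∪ B ∪ ∂*A ∪ ∂*B) is at most n^d/(2d), where ∂*T = {x : all neighbors of x lie in T}. -/

import Mathlib

/-- Adjacency on the discrete torus `ℤ_n^d`: differ by `±1 (mod n)` in exactly
one coordinate. -/
def adjT {n d : ℕ} (x y : Fin d → ZMod n) : Prop :=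
  ∃ i, (y i = x i + 1 ∨ y i = x i - 1) ∧ ∀ j, j ≠ i → y j = x j

/-- The discrete torus `ℤ_n^d` as a simple graph. -/
def torusGraph (n d : ℕ) : SimpleGraph (Fin d → ZMod n) where
  Adj x y := x ≠ y ∧ adjT x y
  symm := by
    constructor
    rintro x y ⟨hne, i, hi, hj⟩
    refine ⟨hne.symm, i, ?_, fun j hjne => (hj j hjne).symm⟩
    rcases hi with h | h
    · right; rw [h]; ring
    · left; rw [h]; ring
  loopless := ⟨fun x h => h.1 rfl⟩

/-- A vertex of the torus (with `n` even) is even if the sum of its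
coordinates, reduced mod `2`, is zero. -/
def evenT {n d : ℕ} (hn : 2 ∣ n) (x : Fin d → ZMod n) : Prop :=
  ∑ i, ZMod.castHom hn (ZMod 2) (x i) = 0

namespace TorusAux

variable {n d : ℕ}

def unit (i : Fin d) (s : ZMod n) : Fin d → ZMod n := fun j => if j = i then s else 0

lemma castk_ne_zero (hn4 : 4 ≤ n) {k : ℕ} (h1 : 0 < k) (h2 : k < 4) :
    (k : ZMod n) ≠ 0 := fun h => by
  have hd := (CharP.cast_eq_zero_iff (ZMod n) n k).mp h
  have := Nat.le_of_dvd h1 hd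
  omega

lemma one_ne (hn4 : 4 ≤ n) : (1 : ZMod n) ≠ 0 := by
  have := castk_ne_zero (n := n) hn4 (k := 1) (by norm_num) (by norm_num)
  simpa using this

lemma sgn_ne_zero (hn4 : 4 ≤ n) {s : ZMod n} (hs : s = 1 ∨ s = -1) : s ≠ 0 := by
  rcases hs with h | h <;> subst h
  · exact one_ne hn4
  · simpa using one_ne hn4

lemma unit_self (i : Fin d) (s : ZMod n) : unit i s i = s := by simp [unit]

lemma unit_ne' {i j : Fin d} (h : j ≠ i) (s : ZMod n) : unit i s j = 0 := by simp [unit, h]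

/-- distinctness of unit vectors -/
lemma unit_inj (hn4 : 4 ≤ n) {i i' : Fin d} {s s' : ZMod n}
    (hs : s = 1 ∨ s = -1)
    (h : unit i s = unit i' s') : i = i' ∧ s = s' := by
  have hi := congrFun h i
  rw [unit_self] at hi
  by_cases hii : i = i'
  · subst hii; rw [unit_self] at hi; exact ⟨rfl, hi⟩
  · rw [unit_ne' hii] at hi
    exact absurd hi (sgn_ne_zero hn4 hs)

/-- a unit vector is never a sum of two unit vectors -/
lemma unit_ne_add (hn4 : 4 ≤ n) {i j k : Fin d} {s t u : ZMod n}
    (hs : s = 1 ∨ s = -1) (ht : t = 1 ∨ t = -1) (hu : u = 1 ∨ u = -1) :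
    unit i s ≠ unit j t + unit k u := by
  intro h
  have h1 := (castk_ne_zero (n := n) hn4 (k := 1) (by norm_num) (by norm_num))
  have h2 := (castk_ne_zero (n := n) hn4 (k := 2) (by norm_num) (by norm_num))
  have h3 := (castk_ne_zero (n := n) hn4 (k := 3) (by norm_num) (by norm_num))
  push_cast at h1 h2 h3
  by_cases hjk : j = k
  · subst hjk
    have hij : i = j := by
      by_contra hij
      have hh := congrFun h i
      rw [Pi.add_apply, unit_ne' hij t, unit_ne' hij u, unit_self, add_zero] at hh
      exact sgn_ne_zero hn4 hs hh
    subst hij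
    have hh := congrFun h i
    rw [Pi.add_apply, unit_self, unit_self, unit_self] at hh
    rcases hs with h' | h' <;> rcases ht with h'' | h'' <;> rcases hu with h''' | h''' <;>
      subst h' h'' h''' <;>
      first
        | exact h1 (by linear_combination hh)
        | exact h1 (by linear_combination -hh)
        | exact h2 (by linear_combination hh)
        | exact h2 (by linear_combination -hh)
        | exact h3 (by linear_combination hh)
        | exact h3 (by linear_combination -hh)
  · have hj := congrFun h j
    have hk := congrFun h k
    rw [Pi.add_apply, unit_self, unit_ne' hjk u, add_zero] at hj
    rw [Pi.add_apply, unit_self, unit_ne' (fun e => hjk e.symm) t, zero_add] at hk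
    by_cases hij : j = i
    · have hik : ¬ (k = i) := fun e => hjk (hij ▸ e ▸ rfl)
      rw [unit_ne' hik] at hk
      exact sgn_ne_zero hn4 hu hk.symm
    · rw [unit_ne' hij] at hj
      exact sgn_ne_zero hn4 ht hj.symm

lemma adj_iff (hn4 : 4 ≤ n) {x y : Fin d → ZMod n} :
    (torusGraph n d).Adj x y ↔ ∃ i : Fin d, ∃ s : ZMod n,
      (s = 1 ∨ s = -1) ∧ y = x + unit i s := by
  constructor
  · rintro ⟨-, i, hi, hj⟩
    rcases hi with h | h
    · refine ⟨i, 1, Or.inl rfl, funext fun j => ?_⟩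
      by_cases hji : j = i
      · subst hji; simpa [unit] using h
      · simp [unit, hji, hj j hji]
    · refine ⟨i, -1, Or.inr rfl, funext fun j => ?_⟩
      by_cases hji : j = i
      · subst hji; simp [unit, h]; ring
      · simp [unit, hji, hj j hji]
  · rintro ⟨i, s, hs, rfl⟩
    constructor
    · intro h
      have := congrFun h i
      simp only [Pi.add_apply, unit, if_pos rfl, left_eq_add] at this
      exact sgn_ne_zero hn4 hs this
    · refine ⟨i, ?_, fun j hji => by simp [unit, hji]⟩
      rcases hs with h | h <;> subst h
      · left; simp [unit]
      · right; simp [unit]; ring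

lemma even_add_unit (hn : 2 ∣ n) {x : Fin d → ZMod n} {i : Fin d} {s : ZMod n}
    (hs : s = 1 ∨ s = -1) : evenT hn (x + unit i s) ↔ ¬ evenT hn x := by
  have hsum : ∑ j, ZMod.castHom hn (ZMod 2) ((x + unit i s) j)
      = (∑ j, ZMod.castHom hn (ZMod 2) (x j)) + 1 := by
    have : ∀ j, ZMod.castHom hn (ZMod 2) ((x + unit i s) j)
        = ZMod.castHom hn (ZMod 2) (x j) + (if j = i then 1 else 0) := by
      intro j
      by_cases hji : j = i
      · subst hji
        rw [if_pos rfl, Pi.add_apply, unit_self, map_add]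
        congr 1
        rcases hs with h | h <;> subst h
        · exact map_one _
        · rw [map_neg, map_one]; decide
      · rw [if_neg hji, Pi.add_apply, unit_ne' hji, add_zero, add_zero]
    rw [Finset.sum_congr rfl (fun j _ => this j), Finset.sum_add_distrib,
      Finset.sum_ite_eq' Finset.univ i (fun _ => (1 : ZMod 2))]
    simp
  unfold evenT
  rw [hsum]
  generalize (∑ j, ZMod.castHom hn (ZMod 2) (x j)) = a
  revert a; decide

lemma even_adj (hn : 2 ∣ n) (hn4 : 4 ≤ n) {x y : Fin d → ZMod n}
    (h : (torusGraph n d).Adj x y) : evenT hn y ↔ ¬ evenT hn x := by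
  obtain ⟨i, s, hs, rfl⟩ := (adj_iff hn4).mp h
  exact even_add_unit hn hs

lemma supp_singleton_of_isolated {V : Type*} {G : SimpleGraph V} {v : V}
    (h : ∀ u, ¬ G.Adj v u) :
    (G.connectedComponentMk v).supp = {v} := by
  ext u
  simp only [SimpleGraph.ConnectedComponent.mem_supp_iff, Set.mem_singleton_iff]
  constructor
  · intro hc
    have hr : G.Reachable v u := (SimpleGraph.ConnectedComponent.eq.mp hc).symm
    obtain ⟨p⟩ := hr
    cases p with
    | nil => rfl
    | cons ha _ => exact absurd ha (h _)
  · rintro rfl; rfl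

lemma reach_transfer {V : Type*} {G : SimpleGraph V} {U1 U2 : Set V}
    {a b : ↥U1} (p : (G.induce U1).Walk a b)
    (hp : ∀ z ∈ p.support, (z : V) ∈ U2) :
    (G.induce U2).Reachable ⟨a, hp a (SimpleGraph.Walk.start_mem_support p)⟩
      ⟨b, hp b (SimpleGraph.Walk.end_mem_support p)⟩ := by
  induction p with
  | nil => exact SimpleGraph.Reachable.refl _
  | @cons u c b h p ih =>
    have hu : (u : V) ∈ U2 := hp u (by simp)
    have hc : (c : V) ∈ U2 := hp c (by simp)
    have hadj : (G.induce U2).Adj ⟨u, hu⟩ ⟨c, hc⟩ := by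
      have : G.Adj (u : V) (c : V) := h
      exact this
    exact hadj.reachable.trans (ih (fun z hz => hp z (by simp [hz])))

lemma component_big (hn4 : 4 ≤ n) {U : Set (Fin d → ZMod n)}
    {x y : Fin d → ZMod n} (hx : x ∈ U) (hy : y ∈ U)
    (hxy : (torusGraph n d).Adj x y)
    (hstep : ∀ i : Fin d, ∀ s : ZMod n, (s = 1 ∨ s = -1) →
      x + unit i s ∈ U ∨ y + unit i s ∈ U) :
    2 * d ≤ Nat.card
      ((((torusGraph n d).induce U).connectedComponentMk ⟨x, hx⟩).supp) := by
  classical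
  haveI : NeZero n := ⟨by omega⟩
  obtain ⟨j, t, ht, hyx⟩ := (adj_iff hn4).mp hxy
  set G' := (torusGraph n d).induce U with hG'
  set c := G'.connectedComponentMk ⟨x, hx⟩ with hc
  -- the sign function
  set sgn : Bool → ZMod n := fun b => if b then 1 else -1 with hsgn
  have hsgn1 : ∀ b, sgn b = 1 ∨ sgn b = -1 := by
    intro b; cases b
    · right; rfl
    · left; rfl
  have hsgninj : ∀ b b' : Bool, sgn b = sgn b' → b = b' := by
    intro b b' hbb
    by_contra hne
    have h2 := castk_ne_zero (n := n) hn4 (k := 2) (by norm_num) (by norm_num)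
    push_cast at h2
    cases b <;> cases b' <;> simp [hsgn] at hbb hne ⊢ <;>
      first
        | exact h2 (by linear_combination hbb)
        | exact h2 (by linear_combination -hbb)
  set f : Fin d × Bool → (Fin d → ZMod n) := fun p =>
    if x + unit p.1 (sgn p.2) ∈ U then x + unit p.1 (sgn p.2)
    else y + unit p.1 (sgn p.2) with hf
  have hfU : ∀ p, f p ∈ U := by
    intro p
    by_cases h : x + unit p.1 (sgn p.2) ∈ U
    · rw [hf]; simp only [if_pos h]; exact h
    · rw [hf]; simp only [if_neg h]
      rcases hstep p.1 (sgn p.2) (hsgn1 p.2) with h' | h'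
      · exact absurd h' h
      · exact h'
  have hfsupp : ∀ p, (⟨f p, hfU p⟩ : ↥U) ∈ c.supp := by
    intro p
    rw [SimpleGraph.ConnectedComponent.mem_supp_iff]
    by_cases h : x + unit p.1 (sgn p.2) ∈ U
    · have hadj : G'.Adj ⟨f p, hfU p⟩ ⟨x, hx⟩ := by
        show (torusGraph n d).Adj (f p) x
        have : f p = x + unit p.1 (sgn p.2) := by rw [hf]; simp only [if_pos h]
        rw [this]
        exact ((adj_iff hn4).mpr ⟨p.1, sgn p.2, hsgn1 p.2, rfl⟩).symm
      exact SimpleGraph.ConnectedComponent.sound hadj.reachable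
    · have hadj : G'.Adj ⟨f p, hfU p⟩ ⟨y, hy⟩ := by
        show (torusGraph n d).Adj (f p) y
        have : f p = y + unit p.1 (sgn p.2) := by rw [hf]; simp only [if_neg h]
        rw [this]
        exact ((adj_iff hn4).mpr ⟨p.1, sgn p.2, hsgn1 p.2, rfl⟩).symm
      have h1 : G'.connectedComponentMk ⟨f p, hfU p⟩ = G'.connectedComponentMk ⟨y, hy⟩ :=
        SimpleGraph.ConnectedComponent.sound hadj.reachable
      have h2 : G'.connectedComponentMk ⟨y, hy⟩ = G'.connectedComponentMk ⟨x, hx⟩ := by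
        refine SimpleGraph.ConnectedComponent.sound ?_
        refine SimpleGraph.Adj.reachable ?_
        show (torusGraph n d).Adj y x
        exact hxy.symm
      rw [h1, h2]
  have hfinj : Function.Injective f := by
    intro p p' hpp
    by_cases h : x + unit p.1 (sgn p.2) ∈ U <;>
      by_cases h' : x + unit p'.1 (sgn p'.2) ∈ U
    · rw [hf] at hpp; simp only [if_pos h, if_pos h'] at hpp
      have := unit_inj hn4 (hsgn1 p.2) (add_left_cancel hpp)
      exact Prod.ext this.1 (hsgninj _ _ this.2)
    · rw [hf] at hpp; simp only [if_pos h, if_neg h'] at hpp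
      exfalso
      rw [hyx] at hpp
      have : unit p.1 (sgn p.2) = unit j t + unit p'.1 (sgn p'.2) := by
        apply add_left_cancel (a := x)
        rw [hpp]; ring
      exact unit_ne_add hn4 (hsgn1 p.2) ht (hsgn1 p'.2) this
    · rw [hf] at hpp; simp only [if_neg h, if_pos h'] at hpp
      exfalso
      rw [hyx] at hpp
      have : unit p'.1 (sgn p'.2) = unit j t + unit p.1 (sgn p.2) := by
        apply add_left_cancel (a := x)
        rw [← hpp]; ring
      exact unit_ne_add hn4 (hsgn1 p'.2) ht (hsgn1 p.2) this
    · rw [hf] at hpp; simp only [if_neg h, if_neg h'] at hpp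
      have := unit_inj hn4 (hsgn1 p.2) (add_left_cancel hpp)
      exact Prod.ext this.1 (hsgninj _ _ this.2)
  set g : Fin d × Bool → ↥c.supp := fun p => ⟨⟨f p, hfU p⟩, hfsupp p⟩ with hg
  have hginj : Function.Injective g := by
    intro p p' hpp
    apply hfinj
    have := congrArg (fun z : ↥c.supp => (z : ↥U).1) hpp
    exact this
  have := Nat.card_le_card_of_injective g hginj
  have hcard : Nat.card (Fin d × Bool) = 2 * d := by
    rw [Nat.card_prod]
    simp [Nat.card_eq_fintype_card]
    ring
  omega

end TorusAux

open TorusAux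


/-- Let `n ≥ 4` be even, `d ≥ 1`, and let `A` (even vertices) and `B` (odd
vertices) be subsets of the torus `ℤ_n^d` with no edges between `A` and `B`.
Then every connected component of the complement of `A ∪ B` is either a
single vertex all of whose neighbors lie in `A`, or all in `B`, or has size
at least `2d`; consequently the number of connected components of
`ℤ_n^d \ (A ∪ B ∪ ∂*A ∪ ∂*B)` is at most `n^d / (2d)`, where
`∂*T = {x : all neighbors of x lie in T}`. -/
theorem torus_components_of_complement {n d : ℕ} (hn : 2 ∣ n) (hn4 : 4 ≤ n)
    (hd : 1 ≤ d) (A B : Set (Fin d → ZMod n))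
    (hA : ∀ a ∈ A, evenT hn a) (hB : ∀ b ∈ B, ¬ evenT hn b)
    (hAB : ∀ a ∈ A, ∀ b ∈ B, ¬ (torusGraph n d).Adj a b) :
    (∀ c : ((torusGraph n d).induce ((A ∪ B)ᶜ)).ConnectedComponent,
        (∃ v : ((A ∪ B)ᶜ : Set (Fin d → ZMod n)), c.supp = {v} ∧
          ((∀ u, (torusGraph n d).Adj v.1 u → u ∈ A) ∨
           (∀ u, (torusGraph n d).Adj v.1 u → u ∈ B))) ∨
        2 * d ≤ Nat.card c.supp) ∧
      (Nat.card ((torusGraph n d).induce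
          ((A ∪ B ∪ {x | ∀ u, (torusGraph n d).Adj x u → u ∈ A}
              ∪ {x | ∀ u, (torusGraph n d).Adj x u → u ∈ B})ᶜ)).ConnectedComponent : ℝ)
        ≤ (n : ℝ) ^ d / (2 * d) := by
  classical
  haveI : NeZero n := ⟨by omega⟩
  have part1 : ∀ c : ((torusGraph n d).induce ((A ∪ B)ᶜ)).ConnectedComponent,
      (∃ v : ((A ∪ B)ᶜ : Set (Fin d → ZMod n)), c.supp = {v} ∧
        ((∀ u, (torusGraph n d).Adj v.1 u → u ∈ A) ∨
         (∀ u, (torusGraph n d).Adj v.1 u → u ∈ B))) ∨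
      2 * d ≤ Nat.card c.supp := by
    intro c
    obtain ⟨v, hrep0⟩ := c.exists_rep
    have hrep : ((torusGraph n d).induce ((A ∪ B)ᶜ)).connectedComponentMk v = c := hrep0
    by_cases hnb : ∀ u, (torusGraph n d).Adj v.1 u → u ∈ A ∪ B
    · -- isolated vertex: singleton component
      left
      refine ⟨v, ?_, ?_⟩
      · rw [← hrep]
        apply supp_singleton_of_isolated
        intro u hu
        have hadj : (torusGraph n d).Adj v.1 u.1 := hu
        exact u.2 (hnb u.1 hadj)
      · by_cases heven : evenT hn v.1
        · right
          intro u hadj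
          rcases hnb u hadj with h | h
          · exact absurd (hA u h) (by rw [even_adj hn hn4 hadj]; exact fun h' => h' heven)
          · exact h
        · left
          intro u hadj
          rcases hnb u hadj with h | h
          · exact h
          · exact absurd ((even_adj hn hn4 hadj).mpr heven) (hB u h)
    · right
      push_neg at hnb
      obtain ⟨w0, hadjvw, hw0⟩ := hnb
      have hw0U : w0 ∈ (A ∪ B)ᶜ := hw0
      -- orient so that x is even, y is odd
      have key : ∀ x y : Fin d → ZMod n, ∀ hx : x ∈ (A ∪ B)ᶜ, ∀ hy : y ∈ (A ∪ B)ᶜ,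
          (torusGraph n d).Adj x y → evenT hn x → ¬ evenT hn y →
          2 * d ≤ Nat.card ((((torusGraph n d).induce
            ((A ∪ B)ᶜ)).connectedComponentMk ⟨x, hx⟩).supp) := by
        intro x y hx hy hadj hxe hyo
        apply component_big hn4 hx hy hadj
        intro i s hs
        by_contra hcon
        push_neg at hcon
        obtain ⟨hp, hq⟩ := hcon
        have hpAB : x + unit i s ∈ A ∪ B := by
          by_contra h; exact hp h
        have hqAB : y + unit i s ∈ A ∪ B := by
          by_contra h; exact hq h
        have hpodd : ¬ evenT hn (x + unit i s) := by
          rw [even_add_unit hn hs]; exact fun h => h hxe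
        have hqeven : evenT hn (y + unit i s) := (even_add_unit hn hs).mpr hyo
        have hpB : x + unit i s ∈ B := by
          rcases hpAB with h | h
          · exact absurd (hA _ h) hpodd
          · exact h
        have hqA : y + unit i s ∈ A := by
          rcases hqAB with h | h
          · exact h
          · exact absurd hqeven (hB _ h)
        obtain ⟨j, t, ht, hxy⟩ := (adj_iff hn4).mp hadj
        have hadjpq : (torusGraph n d).Adj (x + unit i s) (y + unit i s) := by
          refine (adj_iff hn4).mpr ⟨j, t, ht, ?_⟩
          rw [hxy]; ring
        exact hAB _ hqA _ hpB hadjpq.symm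
      by_cases heven : evenT hn v.1
      · have hodd : ¬ evenT hn w0 := by
          intro h
          exact ((even_adj hn hn4 hadjvw).mp h) heven
        have := key v.1 w0 v.2 hw0U hadjvw heven hodd
        rw [← hrep]
        convert this using 3
      · have hweven : evenT hn w0 := by
          by_contra h
          exact h ((even_adj hn hn4 hadjvw).mpr heven)
        have := key w0 v.1 hw0U v.2 hadjvw.symm hweven heven
        rw [← hrep]
        have hmk : ((torusGraph n d).induce ((A ∪ B)ᶜ)).connectedComponentMk v
            = ((torusGraph n d).induce ((A ∪ B)ᶜ)).connectedComponentMk ⟨w0, hw0U⟩ := by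
          apply SimpleGraph.ConnectedComponent.sound
          apply SimpleGraph.Adj.reachable
          show (torusGraph n d).Adj v.1 w0
          exact hadjvw
        rw [hmk]
        exact this
  refine ⟨part1, ?_⟩
  set dA : Set (Fin d → ZMod n) := {x | ∀ u, (torusGraph n d).Adj x u → u ∈ A} with hdA
  set dB : Set (Fin d → ZMod n) := {x | ∀ u, (torusGraph n d).Adj x u → u ∈ B} with hdB
  set U2 : Set (Fin d → ZMod n) := (A ∪ B ∪ dA ∪ dB)ᶜ with hU2
  set G2 := (torusGraph n d).induce U2 with hG2
  set G1 := (torusGraph n d).induce ((A ∪ B)ᶜ) with hG1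
  have stepA : ∀ c2 : G2.ConnectedComponent, 2 * d ≤ Nat.card c2.supp := by
    intro c2
    obtain ⟨v, hrep0⟩ := c2.exists_rep
    have hrep : G2.connectedComponentMk v = c2 := hrep0
    have hvAB : v.1 ∉ A ∪ B := fun h => v.2 (Or.inl (Or.inl h))
    have hvdA : v.1 ∉ dA := fun h => v.2 (Or.inl (Or.inr h))
    have hvdB : v.1 ∉ dB := fun h => v.2 (Or.inr h)
    have hU1 : v.1 ∈ (A ∪ B)ᶜ := hvAB
    set v1 : ↥((A ∪ B)ᶜ) := ⟨v.1, hU1⟩ with hv1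
    set c1 := G1.connectedComponentMk v1 with hc1
    have hsuppU2 : ∀ z : ↥((A ∪ B)ᶜ), z ∈ c1.supp → z.1 ∈ U2 := by
      intro z hz
      have hmk : G1.connectedComponentMk z = c1 :=
        (SimpleGraph.ConnectedComponent.mem_supp_iff _ _).mp hz
      have hzdA : z.1 ∉ dA := by
        intro hdAz
        have hiso : ∀ u, ¬ G1.Adj z u := fun u hu => u.2 (Or.inl (hdAz u.1 hu))
        have hs : (G1.connectedComponentMk z).supp = {z} :=
          supp_singleton_of_isolated hiso
        have hv1z : v1 ∈ (G1.connectedComponentMk z).supp := by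
          rw [SimpleGraph.ConnectedComponent.mem_supp_iff, hmk]
        rw [hs, Set.mem_singleton_iff] at hv1z
        have hvz : v.1 = z.1 := congrArg Subtype.val hv1z
        exact hvdA (show v.1 ∈ dA by rw [hvz]; exact hdAz)
      have hzdB : z.1 ∉ dB := by
        intro hdBz
        have hiso : ∀ u, ¬ G1.Adj z u := fun u hu => u.2 (Or.inr (hdBz u.1 hu))
        have hs : (G1.connectedComponentMk z).supp = {z} :=
          supp_singleton_of_isolated hiso
        have hv1z : v1 ∈ (G1.connectedComponentMk z).supp := by
          rw [SimpleGraph.ConnectedComponent.mem_supp_iff, hmk]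
        rw [hs, Set.mem_singleton_iff] at hv1z
        have hvz : v.1 = z.1 := congrArg Subtype.val hv1z
        exact hvdB (show v.1 ∈ dB by rw [hvz]; exact hdBz)
      rintro (((h | h) | h) | h)
      · exact z.2 (Or.inl h)
      · exact z.2 (Or.inr h)
      · exact hzdA h
      · exact hzdB h
    have hbig : 2 * d ≤ Nat.card c1.supp := by
      rcases part1 c1 with ⟨w, hsupp, hw⟩ | h
      · exfalso
        have hv1mem : v1 ∈ c1.supp := by
          rw [SimpleGraph.ConnectedComponent.mem_supp_iff]
        rw [hsupp, Set.mem_singleton_iff] at hv1mem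
        have hvw : v.1 = w.1 := congrArg Subtype.val hv1mem
        rcases hw with hw | hw
        · exact hvdA (fun u hu => hw u (by rw [← hvw]; exact hu))
        · exact hvdB (fun u hu => hw u (by rw [← hvw]; exact hu))
      · exact h
    have hmem : ∀ u : ↥c1.supp, ∃ h2 : (u.1 : Fin d → ZMod n) ∈ U2,
        (⟨u.1.1, h2⟩ : ↥U2) ∈ c2.supp := by
      intro u
      refine ⟨hsuppU2 u.1 u.2, ?_⟩
      have hmku : G1.connectedComponentMk u.1 = c1 :=
        (SimpleGraph.ConnectedComponent.mem_supp_iff _ _).mp u.2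
      have hreach : G1.Reachable v1 u.1 :=
        (SimpleGraph.ConnectedComponent.eq.mp (hc1 ▸ hmku)).symm
      obtain ⟨p⟩ := hreach
      have hp : ∀ z ∈ p.support, (z : Fin d → ZMod n) ∈ U2 := by
        intro z hz
        apply hsuppU2
        obtain ⟨q, r, hqr⟩ := SimpleGraph.Walk.mem_support_iff_exists_append.mp hz
        rw [SimpleGraph.ConnectedComponent.mem_supp_iff, hc1]
        exact (SimpleGraph.ConnectedComponent.sound ⟨q⟩).symm
      have hr2 := reach_transfer p hp
      rw [SimpleGraph.ConnectedComponent.mem_supp_iff, ← hrep]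
      have hveq : (⟨(v1 : Fin d → ZMod n), hp v1 p.start_mem_support⟩ : ↥U2) = v :=
        Subtype.ext rfl
      rw [← hveq]
      exact (SimpleGraph.ConnectedComponent.sound hr2.symm).trans
        (SimpleGraph.ConnectedComponent.sound (SimpleGraph.Reachable.refl _))
    set g : ↥c1.supp → ↥c2.supp :=
      fun u => ⟨⟨u.1.1, (hmem u).choose⟩, (hmem u).choose_spec⟩ with hgdef
    have hginj : Function.Injective g := by
      intro u u' huu
      have : u.1.1 = u'.1.1 := congrArg (fun z : ↥c2.supp => (z : ↥U2).1) huu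
      exact Subtype.ext (Subtype.ext this)
    exact le_trans hbig (Nat.card_le_card_of_injective g hginj)
  -- counting
  haveI : Fintype ↥U2 := Fintype.ofFinite _
  haveI : Fintype G2.ConnectedComponent := Fintype.ofFinite _
  have hemb : ∀ c2 : G2.ConnectedComponent, Nonempty (Fin (2*d) ↪ ↥c2.supp) := by
    intro c2
    haveI : Fintype ↥c2.supp := Fintype.ofFinite _
    apply Function.Embedding.nonempty_of_card_le
    rw [Fintype.card_fin, ← Nat.card_eq_fintype_card]
    exact stepA c2
  set F : G2.ConnectedComponent × Fin (2*d) → ↥U2 :=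
    fun q => ((hemb q.1).some q.2).1 with hF
  have hFinj : Function.Injective F := by
    rintro ⟨c, k⟩ ⟨c', k'⟩ hq
    have hmkq : G2.connectedComponentMk ((hemb c).some k).1 = c :=
      (SimpleGraph.ConnectedComponent.mem_supp_iff _ _).mp ((hemb c).some k).2
    have hmkq' : G2.connectedComponentMk ((hemb c').some k').1 = c' :=
      (SimpleGraph.ConnectedComponent.mem_supp_iff _ _).mp ((hemb c').some k').2
    have hq' : ((hemb c).some k).1 = ((hemb c').some k').1 := hq
    have hcc : c = c' := by rw [← hmkq, ← hmkq', hq']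
    subst hcc
    have : (hemb c).some k = (hemb c).some k' := Subtype.ext hq'
    exact Prod.ext rfl ((hemb c).some.injective this)
  have hle := Nat.card_le_card_of_injective F hFinj
  rw [Nat.card_prod] at hle
  have hf2d : Nat.card (Fin (2*d)) = 2*d := by
    simp [Nat.card_eq_fintype_card]
  rw [hf2d] at hle
  have hU2le : Nat.card ↥U2 ≤ n ^ d := by
    have h1 := Nat.card_le_card_of_injective
      (Subtype.val : ↥U2 → (Fin d → ZMod n)) Subtype.val_injective
    have h2 : Nat.card (Fin d → ZMod n) = n ^ d := by
      rw [Nat.card_eq_fintype_card, Fintype.card_fun, ZMod.card, Fintype.card_fin]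
    exact h2 ▸ h1
  have hnat : Nat.card G2.ConnectedComponent * (2 * d) ≤ n ^ d := le_trans hle hU2le
  have hpos : (0 : ℝ) < 2 * d := by
    have : (1 : ℝ) ≤ d := by exact_mod_cast hd
    linarith
  rw [le_div_iff₀ hpos]
  have hcast : ((Nat.card G2.ConnectedComponent * (2 * d) : ℕ) : ℝ)
      ≤ ((n ^ d : ℕ) : ℝ) := by exact_mod_cast hnat
  push_cast at hcast
  linarith
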